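/- Let w = v·t_r be an element of the affine Weyl group Ŵ, with v ∈ W and r ∈ Q∨. Then: (i) if w is dominant, then r lies in the negative of the closure of the fundamental Weyl chamber, i.e. (r, α) ≤ 0 for all α ∈ Π; (ii) the map from the set of dominant elements of Ŵ to Q∨ sending w = v·t_r to v(r) is a bijection. -/

import Mathlib

open scoped RealInnerProductSpace
open Module

noncomputable section

variable {V : Type*} [NormedAddCommGroup V] [InnerProductSpace ℝ V]

/-- The underlying function of the orthogonal reflection in the hyperplane
orthogonal to `α` (the identity if `α = 0`). -/
def reflFun (α : V) (x : V) : V := x - (2 * ⟪α, x⟫ / ⟪α, α⟫) • α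

lemma reflFun_involutive (α : V) : Function.Involutive (reflFun α) := by
  intro x
  by_cases h : α = 0
  · simp [reflFun, h]
  · have hs : ⟪α, α⟫ ≠ 0 := inner_self_ne_zero.mpr h
    have h1 : ⟪α, x - (2 * ⟪α, x⟫ / ⟪α, α⟫) • α⟫ = -⟪α, x⟫ := by
      rw [inner_sub_right, real_inner_smul_right]
      field_simp
      ring
    simp only [reflFun]
    rw [h1, show 2 * -⟪α, x⟫ / ⟪α, α⟫ = -(2 * ⟪α, x⟫ / ⟪α, α⟫) by ring,
      neg_smul, sub_neg_eq_add]
    abel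

/-- The orthogonal reflection in the hyperplane orthogonal to `α`, as a linear
equivalence (the identity if `α = 0`). -/
def sRefl (α : V) : V ≃ₗ[ℝ] V where
  toFun := reflFun α
  map_add' x y := by
    simp only [reflFun, inner_add_right]
    rw [show 2 * (⟪α, x⟫ + ⟪α, y⟫) / ⟪α, α⟫
        = 2 * ⟪α, x⟫ / ⟪α, α⟫ + 2 * ⟪α, y⟫ / ⟪α, α⟫ by ring, add_smul]
    abel
  map_smul' c x := by
    simp only [reflFun, real_inner_smul_right, RingHom.id_apply, smul_sub, smul_smul]
    congr 2
    ring
  invFun := reflFun α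
  left_inv := reflFun_involutive α
  right_inv := reflFun_involutive α

/-- The coroot `α∨ = 2α/(α,α)` of a vector `α`. -/
def corootVec (α : V) : V := (2 / ⟪α, α⟫) • α

/-- The (affine) hyperplane `{x | (x, μ) = k}`. -/
def rootHyperplane (μ : V) (k : ℝ) : Set V := {x : V | ⟪x, μ⟫ = k}

/-- `R` is a region of the hyperplane arrangement whose hyperplanes are encoded by the
pairs `(μ, k) ∈ A` (the hyperplane `{x | (x,μ) = k}`): a connected component of the
complement of the union of the hyperplanes. -/
def IsRegionOf (A : Set (V × ℝ)) (R : Set V) : Prop :=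
  ∃ x ∈ (⋃ h ∈ A, rootHyperplane h.1 h.2)ᶜ,
    R = connectedComponentIn (⋃ h ∈ A, rootHyperplane h.1 h.2)ᶜ x

open Classical in
/-- The characteristic polynomial of the hyperplane arrangement encoded by
`A : Set (V × ℝ)` in an ambient space of dimension `p`, evaluated at `t`, via
Whitney's theorem: `χ(A,t) = ∑ (-1)^{#S} t^{dim ∩ S}`, the sum being over all central
subarrangements `S ⊆ A` (junk value `0` if `A` is infinite). -/
noncomputable def charPolyEval (p : ℕ) (A : Set (V × ℝ)) (t : ℝ) : ℝ :=
  if hA : A.Finite then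
    ∑ S ∈ hA.toFinset.powerset,
      if (⋂ h ∈ (S : Set (V × ℝ)), rootHyperplane h.1 h.2).Nonempty then
        (-1 : ℝ) ^ S.card *
          t ^ (p - Module.finrank ℝ (Submodule.span ℝ (Prod.fst '' (S : Set (V × ℝ)))))
      else 0
  else 0

/-- The linear action of `w = v·t_r ∈ Ŵ` on `V ⊕ ℝδ`:
`w(μ + kδ) = v(μ) + (k - (μ,r))δ`. -/
def affAct (v : V ≃ₗ[ℝ] V) (r : V) (β : V × ℝ) : V × ℝ :=
  (v β.1, β.2 - ⟪β.1, r⟫)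

/-- The linear action of `w⁻¹` on `V ⊕ ℝδ`, for `w = v·t_r ∈ Ŵ`:
`w⁻¹(μ + kδ) = v⁻¹(μ) + (k + (v⁻¹μ, r))δ`. -/
def affActInv (v : V ≃ₗ[ℝ] V) (r : V) (β : V × ℝ) : V × ℝ :=
  (v.symm β.1, β.2 + ⟪v.symm β.1, r⟫)

/-- The affine `∗`-action of `w = v·t_r ∈ Ŵ` on `V`: `w ∗ x = v(x + r)`. -/
def affStar (v : V ≃ₗ[ℝ] V) (r : V) (x : V) : V := v (x + r)

/-- The affine `∗`-action of `w⁻¹` on `V`, for `w = v·t_r ∈ Ŵ`: `w⁻¹ ∗ x = v⁻¹(x) - r`. -/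
def affStarInv (v : V ≃ₗ[ℝ] V) (r : V) (x : V) : V := v.symm x - r

/-- An irreducible reduced crystallographic root system `Δ` of rank `p`, spanning a real
inner product space `V`, together with a choice of positive system `Δ⁺ = pos`, simple
roots `α₁, …, α_p`, and the highest root `θ`. -/
structure RootSystemData (V : Type*) [NormedAddCommGroup V] [InnerProductSpace ℝ V]
    (p : ℕ) where
  /-- the set of roots -/
  Δ : Set V
  finite : Δ.Finite
  zero_notMem : (0 : V) ∉ Δ
  span_eq_top : Submodule.span ℝ Δ = ⊤
  finrank_eq : Module.finrank ℝ V = p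
  neg_mem : ∀ α ∈ Δ, -α ∈ Δ
  /-- reduced: the only multiples of a root that are roots are `±α` -/
  reduced : ∀ α ∈ Δ, ∀ c : ℝ, c • α ∈ Δ → c = 1 ∨ c = -1
  /-- crystallographic: Cartan integers -/
  crystallographic : ∀ α ∈ Δ, ∀ β ∈ Δ, ∃ n : ℤ, 2 * ⟪α, β⟫ / ⟪α, α⟫ = (n : ℝ)
  reflect_mem : ∀ α ∈ Δ, ∀ β ∈ Δ, sRefl α β ∈ Δ
  /-- irreducible: no splitting into two orthogonal parts -/
  irred : ∀ S T : Set V, Δ = S ∪ T → (∀ a ∈ S, ∀ b ∈ T, ⟪a, b⟫ = 0) → S = ∅ ∨ T = ∅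
  /-- the simple roots `α₁, …, α_p` -/
  simpleRoot : Fin p → V
  simpleRoot_mem : ∀ i, simpleRoot i ∈ Δ
  simpleRoot_indep : LinearIndependent ℝ simpleRoot
  /-- the positive roots `Δ⁺` -/
  pos : Set V
  pos_def : pos = {α ∈ Δ | ∃ c : Fin p → ℕ, α = ∑ i, (c i : ℝ) • simpleRoot i}
  pos_or_neg : ∀ α ∈ Δ, α ∈ pos ∨ -α ∈ pos
  /-- the highest root -/
  θ : V
  θ_mem : θ ∈ pos
  θ_highest : ∀ α ∈ pos, ∃ c : Fin p → ℕ, θ = α + ∑ i, (c i : ℝ) • simpleRoot i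

namespace RootSystemData

variable {p : ℕ} (RS : RootSystemData V p)

/-- The coroot lattice `Q∨`, generated by the coroots of the roots. -/
def corootLattice : AddSubgroup V := AddSubgroup.closure (corootVec '' RS.Δ)

/-- The coweight lattice `P∨ = {x | (x, α) ∈ ℤ for all roots α}`. -/
def coweightLattice : AddSubgroup V where
  carrier := {x : V | ∀ α ∈ RS.Δ, ∃ n : ℤ, ⟪x, α⟫ = (n : ℝ)}
  zero_mem' := fun α _ => ⟨0, by simp⟩
  add_mem' := by
    intro x y hx hy α hα
    obtain ⟨n, hn⟩ := hx α hα
    obtain ⟨m, hm⟩ := hy α hα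
    exact ⟨n + m, by rw [inner_add_left, hn, hm]; push_cast; ring⟩
  neg_mem' := by
    intro x hx α hα
    obtain ⟨n, hn⟩ := hx α hα
    exact ⟨-n, by rw [inner_neg_left, hn]; push_cast; ring⟩

/-- The index of connection `f = [P∨ : Q∨]`. -/
noncomputable def indexOfConnection : ℕ :=
  RS.corootLattice.relIndex RS.coweightLattice

/-- The Weyl group `W`, generated by the reflections in the roots. -/
def weylGroup : Subgroup (V ≃ₗ[ℝ] V) :=
  Subgroup.closure {w : V ≃ₗ[ℝ] V | ∃ α ∈ RS.Δ, w = sRefl α}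

/-- The partial order `μ ≼ γ` on roots: `γ - μ` is a nonnegative integer combination of
the simple roots. -/
def rootLe (μ γ : V) : Prop :=
  ∃ c : Fin p → ℕ, γ = μ + ∑ i, (c i : ℝ) • RS.simpleRoot i

/-- An ideal of `Δ⁺`. -/
def IsIdeal (I : Set V) : Prop :=
  I ⊆ RS.pos ∧ ∀ γ ∈ I, ∀ μ ∈ RS.pos, γ + μ ∈ RS.Δ → γ + μ ∈ I

/-- An antichain in the poset `(Δ⁺, ≼)`. -/
def IsRootAntichain (Γ : Set V) : Prop :=
  Γ ⊆ RS.pos ∧ ∀ μ ∈ Γ, ∀ γ ∈ Γ, RS.rootLe μ γ → μ = γ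

/-- The set of minimal elements (generators, for an ideal) of a subset of `Δ⁺`. -/
def gens (I : Set V) : Set V := {γ ∈ I | ∀ μ ∈ I, RS.rootLe μ γ → μ = γ}

/-- The ideal `I⟨Γ⟩` generated by an antichain `Γ`. -/
def idealGen (Γ : Set V) : Set V := {μ ∈ RS.pos | ∃ γ ∈ Γ, RS.rootLe γ μ}

/-- The set `Ξ(I)` of maximal elements of `Δ⁺ \ I`. -/
def XiSet (I : Set V) : Set V :=
  {γ ∈ RS.pos \ I | ∀ μ ∈ RS.pos \ I, RS.rootLe γ μ → γ = μ}

/-- `k(μ, I)`: the minimal number of summands in an expression of `μ` as a sum of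
positive roots not in `I`. -/
noncomputable def kNum (I : Set V) (μ : V) : ℕ :=
  sInf {n : ℕ | ∃ f : Fin n → V, (∀ i, f i ∈ RS.pos \ I) ∧ μ = ∑ i, f i}

/-- A root is short if it is strictly shorter than the highest root `θ`. -/
def IsShort (α : V) : Prop := α ∈ RS.Δ ∧ ⟪α, α⟫ < ⟪RS.θ, RS.θ⟫

/-- The short positive roots `Δ⁺_s`. -/
def shortPos : Set V := {α ∈ RS.pos | ⟪α, α⟫ < ⟪RS.θ, RS.θ⟫}

/-- The long positive roots `Δ⁺_l`. -/
def longPos : Set V := {α ∈ RS.pos | ⟪α, α⟫ = ⟪RS.θ, RS.θ⟫}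

/-- `Δ` has roots of exactly two lengths, the squared length ratio (long over short)
being `ratio`. -/
def LengthRatio (ratio : ℝ) : Prop :=
  ∃ ls : ℝ, 0 < ls ∧ ls < ⟪RS.θ, RS.θ⟫ ∧
    (∀ α ∈ RS.Δ, ⟪α, α⟫ = ls ∨ ⟪α, α⟫ = ⟪RS.θ, RS.θ⟫) ∧
    (∃ α ∈ RS.Δ, ⟪α, α⟫ = ls) ∧ ⟪RS.θ, RS.θ⟫ = ratio * ls

/-- `Δ` has roots of two different lengths. -/
def TwoLengths : Prop := ∃ ratio : ℝ, RS.LengthRatio ratio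

/-- The simple roots `Π(Δ⁺_s)` of the root system `Δ_s` of short roots with respect to
the positive system `Δ⁺_s`: the short positive roots that are not sums of two short
positive roots. -/
def shortSimple : Set V :=
  {α ∈ RS.shortPos | ¬ ∃ β ∈ RS.shortPos, ∃ γ ∈ RS.shortPos, α = β + γ}

/-- The positive affine roots `Δ̂⁺`, an affine root `μ + kδ` being encoded as the pair
`(μ, k)`. -/
def affPos : Set (V × ℝ) :=
  {β : V × ℝ | β.1 ∈ RS.Δ ∧ (0 < β.2 ∨ (β.2 = 0 ∧ β.1 ∈ RS.pos))}

/-- A pair `(v, r)` with `v ∈ W`, `r ∈ Q∨` represents the element `w = v·t_r` of the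
affine Weyl group `Ŵ = W ⋉ Q∨`; it is dominant if `w(α) ∈ Δ̂⁺` for all `α ∈ Π`. -/
def IsDominantPair (v : V ≃ₗ[ℝ] V) (r : V) : Prop :=
  v ∈ RS.weylGroup ∧ r ∈ RS.corootLattice ∧
    ∀ i, affAct v r (RS.simpleRoot i, 0) ∈ RS.affPos

/-- `N(w) = {β ∈ Δ̂⁺ | w(β) ∈ -Δ̂⁺}` for `w = v·t_r`. -/
def Nset (v : V ≃ₗ[ℝ] V) (r : V) : Set (V × ℝ) :=
  {β : V × ℝ | β ∈ RS.affPos ∧ -(affAct v r β) ∈ RS.affPos}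

/-- The first layer ideal `I_w = {μ ∈ Δ⁺ | δ - μ ∈ N(w)}` of `w = v·t_r`. -/
def firstLayerIdeal (v : V ≃ₗ[ℝ] V) (r : V) : Set V :=
  {μ ∈ RS.pos | ((-μ, (1 : ℝ)) : V × ℝ) ∈ RS.Nset v r}

/-- `w = v·t_r` is minimal: dominant, and for every affine simple root `α ∈ Π̂`,
writing `w⁻¹(α) = kδ + μ`, one has `k ≥ -1`. -/
def IsMinimalPair (v : V ≃ₗ[ℝ] V) (r : V) : Prop :=
  RS.IsDominantPair v r ∧
    (∀ i, -1 ≤ (affActInv v r (RS.simpleRoot i, 0)).2) ∧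
    -1 ≤ (affActInv v r (-RS.θ, 1)).2

/-- `w = v·t_r` is maximal: dominant, and for every affine simple root `α ∈ Π̂`,
writing `w⁻¹(α) = kδ + μ`, one has `k ≤ 1`. -/
def IsMaximalPair (v : V ≃ₗ[ℝ] V) (r : V) : Prop :=
  RS.IsDominantPair v r ∧
    (∀ i, (affActInv v r (RS.simpleRoot i, 0)).2 ≤ 1) ∧
    (affActInv v r (-RS.θ, 1)).2 ≤ 1

/-- `w = v·t_r` is `s`-minimal: dominant, `k ≥ -1` for short simple `α`, and `k ≥ 0`
for `α ∈ Π̂_l = Π_l ∪ {α₀}`, where `w⁻¹(α) = kδ + μ`. -/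
def IsSMinimalPair (v : V ≃ₗ[ℝ] V) (r : V) : Prop :=
  RS.IsDominantPair v r ∧
    (∀ i, RS.IsShort (RS.simpleRoot i) →
      -1 ≤ (affActInv v r (RS.simpleRoot i, 0)).2) ∧
    (∀ i, ¬ RS.IsShort (RS.simpleRoot i) →
      0 ≤ (affActInv v r (RS.simpleRoot i, 0)).2) ∧
    0 ≤ (affActInv v r (-RS.θ, 1)).2

/-- `w = v·t_r` is `s`-maximal: dominant, `k ≤ 1` for short simple `α`, and `k ≤ 0`
for `α ∈ Π̂_l = Π_l ∪ {α₀}`, where `w⁻¹(α) = kδ + μ`. -/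
def IsSMaximalPair (v : V ≃ₗ[ℝ] V) (r : V) : Prop :=
  RS.IsDominantPair v r ∧
    (∀ i, RS.IsShort (RS.simpleRoot i) →
      (affActInv v r (RS.simpleRoot i, 0)).2 ≤ 1) ∧
    (∀ i, ¬ RS.IsShort (RS.simpleRoot i) →
      (affActInv v r (RS.simpleRoot i, 0)).2 ≤ 0) ∧
    (affActInv v r (-RS.θ, 1)).2 ≤ 0

/-- The open fundamental Weyl chamber `C`. -/
def chamber : Set V := {x : V | ∀ i, 0 < ⟪x, RS.simpleRoot i⟫}

/-- The open fundamental alcove `A`. -/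
def alcove : Set V := {x : V | (∀ i, 0 < ⟪x, RS.simpleRoot i⟫) ∧ ⟪x, RS.θ⟫ < 1}

/-- The affine arrangement of all hyperplanes `{x | (x,μ) = k}`, `μ ∈ Δ⁺`, `k ∈ ℤ`,
whose regions are the alcoves. -/
def affineArrangement : Set (V × ℝ) :=
  {h : V × ℝ | h.1 ∈ RS.pos ∧ ∃ k : ℤ, h.2 = (k : ℝ)}

/-- The dominant region `R_I` of the Catalan (equivalently, Shi) arrangement attached
to an ideal `I ⊆ Δ⁺` under the Shi bijection. -/
def regionOfIdeal (I : Set V) : Set V :=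
  {x ∈ RS.chamber | (∀ γ ∈ I, 1 < ⟪x, γ⟫) ∧ ∀ γ ∈ RS.pos \ I, ⟪x, γ⟫ < 1}

/-- The semi-Catalan arrangement `Cat_s(Δ)`. -/
def semiCatalan : Set (V × ℝ) :=
  {h : V × ℝ | h.1 ∈ RS.shortPos ∧ (h.2 = -1 ∨ h.2 = 0 ∨ h.2 = 1)} ∪
    {h : V × ℝ | h.1 ∈ RS.longPos ∧ h.2 = 0}

/-- The `m`-semi-Catalan arrangement `Cat_s^m(Δ)`. -/
def semiCatalanM (m : ℕ) : Set (V × ℝ) :=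
  {h : V × ℝ | h.1 ∈ RS.shortPos ∧ ∃ k : ℤ, |k| ≤ (m : ℤ) ∧ h.2 = (k : ℝ)} ∪
    {h : V × ℝ | h.1 ∈ RS.longPos ∧ h.2 = 0}

/-- The region `R_Γ^(s)` of the semi-Catalan arrangement attached to a short
antichain `Γ`. -/
def sRegion (Γ : Set V) : Set V :=
  {x ∈ RS.chamber | (∀ μ ∈ RS.idealGen Γ ∩ RS.shortPos, 1 < ⟪x, μ⟫) ∧
    ∀ μ ∈ RS.shortPos \ RS.idealGen Γ, ⟪x, μ⟫ < 1}

/-- `α` has height `n` (sum of the coefficients over the simple roots). -/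
def heightIs (α : V) (n : ℕ) : Prop :=
  ∃ c : Fin p → ℕ, α = ∑ i, (c i : ℝ) • RS.simpleRoot i ∧ ∑ i, c i = n

/-- `e` enumerates the exponents `e₁, …, e_p` of the Weyl group `W`, characterized by the
Shapiro–Kostant–Steinberg property: for every `k ≥ 1`, the number of positive roots of
height `k` equals the number of exponents that are `≥ k`. -/
def IsExponents (e : Fin p → ℕ) : Prop :=
  ∀ k : ℕ, 1 ≤ k →
    {α ∈ RS.pos | RS.heightIs α k}.ncard = {i : Fin p | k ≤ e i}.ncard

/-- `h` is the Coxeter number of `W`, characterized by `#Δ = p·h`. -/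
def IsCoxeterNumber (h : ℕ) : Prop := RS.Δ.ncard = p * h

open Classical in
/-- `g` is the sum of the coefficients of the short simple roots in the expression
`θ = Σ cᵢ αᵢ` of the highest root. -/
def IsShortCoeffSum (g : ℕ) : Prop :=
  ∃ c : Fin p → ℕ, RS.θ = ∑ i, (c i : ℝ) • RS.simpleRoot i ∧
    (∑ i, if RS.IsShort (RS.simpleRoot i) then c i else 0) = g

open Classical in
/-- The number of constraints of the simplex
`D_max = {x | (x,αᵢ) ≤ 1 ∀i, (x,θ) ≥ 0}` that are active (hold with equality) at `x`;
for `x ∈ D_max` this is the codimension of the face of `D_max` containing `x`. -/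
noncomputable def dmaxFaceCodim (x : V) : ℕ :=
  {i : Fin p | ⟪x, RS.simpleRoot i⟫ = 1}.ncard + (if ⟪x, RS.θ⟫ = 0 then 1 else 0)

end RootSystemData

/-!
Fix `x` in the fundamental alcove. Every root pairs with `x` into `(-1, 1) \ {0}` and
with `Q∨` into `ℤ`, so `w = v·t_r` is dominant exactly when `w⁻¹ ∗ x = v⁻¹(x - v r)`
lies in the chamber `C`. For `q ∈ Q∨` the point `x - q` lies on no root hyperplane, so
exactly one element of the finite Weyl group maps it into `C` (`W` acts simply
transitively on chambers, by the exchange condition); its inverse is the `v` of the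
unique dominant `w` with `v r = q`.
-/

lemma sRefl_apply (α x : V) : sRefl α x = x - (2 * ⟪α, x⟫ / ⟪α, α⟫) • α := rfl

lemma sRefl_inv (α : V) : (sRefl α)⁻¹ = sRefl α := rfl

lemma sRefl_mul_self (α : V) : sRefl α * sRefl α = 1 :=
  LinearEquiv.ext (reflFun_involutive α)

lemma sRefl_apply_self {α : V} (h : α ≠ 0) : sRefl α α = -α := by
  have : ⟪α, α⟫ ≠ 0 := inner_self_ne_zero.mpr h
  rw [sRefl_apply, mul_div_assoc, div_self this, mul_one, two_smul]
  abel

lemma sRefl_neg (α : V) : sRefl (-α) = sRefl α := by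
  ext x
  simp [sRefl_apply, neg_div, sub_eq_add_neg]

lemma inner_sRefl_sRefl (α x y : V) : ⟪sRefl α x, sRefl α y⟫ = ⟪x, y⟫ := by
  rcases eq_or_ne α 0 with rfl | h
  · simp [sRefl_apply]
  · have : ⟪α, α⟫ ≠ 0 := inner_self_ne_zero.mpr h
    simp only [sRefl_apply, inner_sub_left, inner_sub_right, real_inner_smul_left,
      real_inner_smul_right, real_inner_comm x α, real_inner_comm y α]
    field_simp
    ring

lemma inner_sRefl_right (α x y : V) :
    ⟪x, sRefl α y⟫ = ⟪x, y⟫ - 2 * ⟪α, y⟫ / ⟪α, α⟫ * ⟪x, α⟫ := by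
  rw [sRefl_apply, inner_sub_right, real_inner_smul_right]

lemma sRefl_apply_of_isometry {u : V ≃ₗ[ℝ] V} (hu : ∀ x y, ⟪u x, u y⟫ = ⟪x, y⟫) (α : V) :
    sRefl (u α) = u * sRefl α * u⁻¹ := by
  ext x
  obtain ⟨y, rfl⟩ := u.surjective x
  change sRefl (u α) (u y) = u (sRefl α (u.symm (u y)))
  rw [u.symm_apply_apply, sRefl_apply, sRefl_apply, hu, hu, map_sub, map_smul]

lemma sub_intCast_pos_iff {t : ℝ} (ht : |t| < 1) (n : ℤ) :
    0 < t - n ↔ n < 0 ∨ n = 0 ∧ 0 < t := by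
  obtain ⟨h₁, h₂⟩ := abs_lt.mp ht
  rcases lt_trichotomy n 0 with hn | rfl | hn
  · have : (n : ℝ) ≤ -1 := by exact_mod_cast Int.le_sub_one_of_lt hn
    simp only [hn, true_or, iff_true]
    linarith
  · simp
  · have : (1 : ℝ) ≤ n := by exact_mod_cast hn
    simp only [hn.not_gt, hn.ne', false_or, false_and, iff_false, not_lt]
    linarith

lemma sub_intCast_ne_zero {t : ℝ} (ht : |t| < 1) (ht₀ : t ≠ 0) (n : ℤ) : t - n ≠ 0 := by
  intro h
  rw [sub_eq_zero.mp h, ← Int.cast_abs, ← Int.cast_one, Int.cast_lt,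
    Int.abs_lt_one_iff] at ht
  simp [sub_eq_zero.mp h, ht] at ht₀

namespace RootSystemData

variable {p : ℕ} (RS : RootSystemData V p)

lemma ne_zero_of_mem {α : V} (h : α ∈ RS.Δ) : α ≠ 0 := fun h0 => RS.zero_notMem (h0 ▸ h)

lemma mem_of_mem_pos {β : V} (h : β ∈ RS.pos) : β ∈ RS.Δ := by
  rw [RS.pos_def] at h
  exact h.1

lemma simpleRoot_mem_pos (i : Fin p) : RS.simpleRoot i ∈ RS.pos := by
  rw [RS.pos_def]
  exact ⟨RS.simpleRoot_mem i, Pi.single i 1, by simp [Pi.single_apply]⟩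

lemma finiteDimensional (RS : RootSystemData V p) : FiniteDimensional ℝ V :=
  ⟨RS.span_eq_top ▸ Submodule.fg_span RS.finite⟩

def simpleBasis : Basis (Fin p) ℝ V :=
  haveI := RS.finiteDimensional
  basisOfLinearIndependentOfCardEqFinrank' RS.simpleRoot RS.simpleRoot_indep
    (by simp [RS.finrank_eq])

@[simp]
lemma coe_simpleBasis : ⇑RS.simpleBasis = RS.simpleRoot := by
  have := RS.finiteDimensional
  simp [simpleBasis]

@[simp]
lemma simpleBasis_repr_simpleRoot (i : Fin p) :
    RS.simpleBasis.repr (RS.simpleRoot i) = Finsupp.single i 1 := by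
  rw [← coe_simpleBasis, Basis.repr_self]

lemma inner_eq_sum_simpleBasis_repr (x β : V) :
    ⟪x, β⟫ = ∑ j, RS.simpleBasis.repr β j * ⟪x, RS.simpleRoot j⟫ := by
  conv_lhs => rw [← RS.simpleBasis.sum_repr β]
  simp [inner_sum, real_inner_smul_right]

lemma simpleBasis_repr_nonneg {β : V} (h : β ∈ RS.pos) (j : Fin p) :
    0 ≤ RS.simpleBasis.repr β j := by
  rw [RS.pos_def] at h
  obtain ⟨-, c, rfl⟩ := h
  have := RS.simpleBasis.repr_sum_self (fun i => (c i : ℝ))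
  rw [coe_simpleBasis] at this
  rw [this]
  positivity

lemma neg_notMem_pos {β : V} (h : β ∈ RS.pos) : -β ∉ RS.pos := by
  intro hneg
  refine RS.ne_zero_of_mem (RS.mem_of_mem_pos h) (RS.simpleBasis.ext_elem fun j => ?_)
  have := RS.simpleBasis_repr_nonneg hneg j
  rw [map_neg, Finsupp.neg_apply] at this
  simp only [map_zero, Finsupp.coe_zero, Pi.zero_apply]
  linarith [RS.simpleBasis_repr_nonneg h j]

lemma simpleBasis_repr_sRefl_of_ne {i j : Fin p} (hj : j ≠ i) (β : V) :
    RS.simpleBasis.repr (sRefl (RS.simpleRoot i) β) j = RS.simpleBasis.repr β j := by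
  simp [sRefl_apply, hj.symm]

lemma sRefl_simpleRoot_mem_pos (i : Fin p) {β : V} (hβ : β ∈ RS.pos)
    (hne : β ≠ RS.simpleRoot i) : sRefl (RS.simpleRoot i) β ∈ RS.pos := by
  set b := RS.simpleBasis
  have hΔ := RS.reflect_mem _ (RS.simpleRoot_mem i) _ (RS.mem_of_mem_pos hβ)
  refine (RS.pos_or_neg _ hΔ).resolve_right fun hneg => hne ?_
  have hcoord : ∀ j ≠ i, b.repr β j = 0 := by
    intro j hj
    have h1 := RS.simpleBasis_repr_nonneg hneg j
    rw [map_neg, Finsupp.neg_apply, RS.simpleBasis_repr_sRefl_of_ne hj] at h1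
    linarith [RS.simpleBasis_repr_nonneg hβ j]
  have hβ_eq : β = b.repr β i • RS.simpleRoot i := by
    conv_lhs => rw [← b.sum_repr β]
    rw [Finset.sum_eq_single i (fun j _ hj => by rw [hcoord j hj, zero_smul]) (by simp)]
    simp [b]
  rcases RS.reduced _ (RS.simpleRoot_mem i) _ (hβ_eq ▸ RS.mem_of_mem_pos hβ) with h | h
  · rw [hβ_eq, h, one_smul]
  · linarith [RS.simpleBasis_repr_nonneg hβ i]

lemma inner_pos_of_mem_chamber {x : V} (hx : x ∈ RS.chamber) {β : V} (hβ : β ∈ RS.pos) :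
    0 < ⟪x, β⟫ := by
  set b := RS.simpleBasis
  obtain ⟨j, hj⟩ : ∃ j, b.repr β j ≠ 0 := by
    by_contra! h
    exact RS.ne_zero_of_mem (RS.mem_of_mem_pos hβ) (b.ext_elem (by simpa using h))
  rw [RS.inner_eq_sum_simpleBasis_repr]
  exact Finset.sum_pos' (fun k _ => mul_nonneg (RS.simpleBasis_repr_nonneg hβ k) (hx k).le)
    ⟨j, Finset.mem_univ j, mul_pos ((RS.simpleBasis_repr_nonneg hβ j).lt_of_ne' hj) (hx j)⟩

lemma mem_pos_iff_inner_pos {x : V} (hx : x ∈ RS.chamber) {β : V} (hβ : β ∈ RS.Δ) :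
    β ∈ RS.pos ↔ 0 < ⟪x, β⟫ := by
  refine ⟨RS.inner_pos_of_mem_chamber hx, fun h => (RS.pos_or_neg β hβ).resolve_right ?_⟩
  intro hneg
  have := RS.inner_pos_of_mem_chamber hx hneg
  rw [inner_neg_right] at this
  linarith

lemma inner_ne_zero_of_mem_chamber {x : V} (hx : x ∈ RS.chamber) {β : V} (hβ : β ∈ RS.Δ) :
    ⟪x, β⟫ ≠ 0 := by
  rcases RS.pos_or_neg β hβ with h | h
  · exact (RS.inner_pos_of_mem_chamber hx h).ne'
  · have := RS.inner_pos_of_mem_chamber hx h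
    rw [inner_neg_right] at this
    exact (neg_pos.mp this).ne

lemma exists_inner_simpleRoot_pos {β : V} (hβ : β ∈ RS.pos) :
    ∃ i, 0 < ⟪β, RS.simpleRoot i⟫ := by
  by_contra! h
  refine RS.ne_zero_of_mem (RS.mem_of_mem_pos hβ) (real_inner_self_nonpos.mp ?_)
  rw [RS.inner_eq_sum_simpleBasis_repr]
  exact Finset.sum_nonpos fun j _ =>
    mul_nonpos_of_nonneg_of_nonpos (RS.simpleBasis_repr_nonneg hβ j) (h j)

lemma chamber_nonempty : RS.chamber.Nonempty := by
  have := RS.finiteDimensional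
  let f : StrongDual ℝ V := LinearMap.toContinuousLinearMap (∑ i, RS.simpleBasis.coord i)
  refine ⟨(InnerProductSpace.toDual ℝ V).symm f, fun i => ?_⟩
  rw [InnerProductSpace.toDual_symm_apply]
  simp [f, Finsupp.single_apply]

lemma inner_self_simpleRoot_pos (i : Fin p) : 0 < ⟪RS.simpleRoot i, RS.simpleRoot i⟫ :=
  real_inner_self_pos.mpr (RS.ne_zero_of_mem (RS.simpleRoot_mem i))

lemma weylGroup_induction {P : (V ≃ₗ[ℝ] V) → Prop} (refl : ∀ α ∈ RS.Δ, P (sRefl α))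
    (one : P 1) (mul : ∀ u w, P u → P w → P (u * w)) {w : V ≃ₗ[ℝ] V}
    (hw : w ∈ RS.weylGroup) : P w := by
  induction hw using Subgroup.closure_induction'' with
  | mem _ h => obtain ⟨α, hα, rfl⟩ := h; exact refl α hα
  | inv_mem _ h => obtain ⟨α, hα, rfl⟩ := h; exact refl α hα
  | one => exact one
  | mul _ _ _ _ hu hw => exact mul _ _ hu hw

lemma inner_apply_apply_of_mem_weylGroup {w : V ≃ₗ[ℝ] V} (hw : w ∈ RS.weylGroup) (x y : V) :
    ⟪w x, w y⟫ = ⟪x, y⟫ := by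
  refine RS.weylGroup_induction (P := fun w => ∀ x y, ⟪w x, w y⟫ = ⟪x, y⟫)
    (fun α _ => inner_sRefl_sRefl α) (fun _ _ => rfl) ?_ hw x y
  exact fun u w hu hw x y => (hu (w x) (w y)).trans (hw x y)

lemma apply_mem_of_mem_weylGroup {w : V ≃ₗ[ℝ] V} (hw : w ∈ RS.weylGroup) {α : V}
    (hα : α ∈ RS.Δ) : w α ∈ RS.Δ := by
  refine RS.weylGroup_induction (P := fun w => ∀ α ∈ RS.Δ, w α ∈ RS.Δ)
    (fun β hβ => RS.reflect_mem β hβ) (fun _ h => h) ?_ hw α hα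
  exact fun u w hu hw α hα => hu _ (hw α hα)

lemma corootLattice_le_coweightLattice : RS.corootLattice ≤ RS.coweightLattice := by
  refine (AddSubgroup.closure_le _).mpr ?_
  rintro _ ⟨α, hα, rfl⟩ β hβ
  obtain ⟨n, hn⟩ := RS.crystallographic α hα β hβ
  exact ⟨n, by rw [corootVec, real_inner_smul_left, ← hn]; ring⟩

lemma apply_mem_corootLattice {w : V ≃ₗ[ℝ] V} (hw : w ∈ RS.weylGroup) {r : V}
    (hr : r ∈ RS.corootLattice) : w r ∈ RS.corootLattice := by
  have : RS.corootLattice ≤ RS.corootLattice.comap w.toLinearMap.toAddMonoidHom := by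
    refine (AddSubgroup.closure_le _).mpr ?_
    rintro _ ⟨α, hα, rfl⟩
    refine AddSubgroup.subset_closure ⟨w α, RS.apply_mem_of_mem_weylGroup hw hα, ?_⟩
    change corootVec (w α) = w (corootVec α)
    rw [corootVec, corootVec, RS.inner_apply_apply_of_mem_weylGroup hw, map_smul]
  exact this hr

lemma finite_weylGroup : Finite RS.weylGroup := by
  have := RS.finite.to_subtype
  refine Finite.of_injective (fun w : RS.weylGroup => fun α : RS.Δ =>
    (⟨w.1 α, RS.apply_mem_of_mem_weylGroup w.2 α.2⟩ : RS.Δ)) fun w₁ w₂ h => ?_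
  refine Subtype.ext (LinearEquiv.toLinearMap_injective (LinearMap.ext_on RS.span_eq_top ?_))
  exact fun α hα => congrArg Subtype.val (congrFun h ⟨α, hα⟩)

lemma sRefl_simpleRoot_mem_weylGroup (i : Fin p) : sRefl (RS.simpleRoot i) ∈ RS.weylGroup :=
  Subgroup.subset_closure ⟨_, RS.simpleRoot_mem i, rfl⟩

def wordProd (l : List (Fin p)) : V ≃ₗ[ℝ] V :=
  (l.map fun i => sRefl (RS.simpleRoot i)).prod

@[simp]
lemma wordProd_nil : RS.wordProd [] = 1 := rfl

@[simp]
lemma wordProd_cons (i : Fin p) (l : List (Fin p)) :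
    RS.wordProd (i :: l) = sRefl (RS.simpleRoot i) * RS.wordProd l := by
  simp [wordProd]

@[simp]
lemma wordProd_append (l₁ l₂ : List (Fin p)) :
    RS.wordProd (l₁ ++ l₂) = RS.wordProd l₁ * RS.wordProd l₂ := by
  simp [wordProd]

lemma wordProd_mem_weylGroup (l : List (Fin p)) : RS.wordProd l ∈ RS.weylGroup := by
  induction l with
  | nil => exact one_mem _
  | cons i l ih => exact RS.wordProd_cons i l ▸ mul_mem (RS.sRefl_simpleRoot_mem_weylGroup i) ih

/-- A minimal counterexample `γ`, for the height `⟪x, γ⟫`, is not simple; some `sᵢ` lowers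
its height, and `s_γ = sᵢ s_{sᵢ γ} sᵢ`. -/
lemma exists_wordProd_eq_sRefl {β : V} (hβ : β ∈ RS.pos) :
    ∃ l, RS.wordProd l = sRefl β := by
  obtain ⟨x, hx⟩ := RS.chamber_nonempty
  by_contra! hβS
  obtain ⟨γ, ⟨hγ, hγS⟩, hmin⟩ := Set.exists_min_image
    {γ | γ ∈ RS.pos ∧ ∀ l, RS.wordProd l ≠ sRefl γ} (fun γ => ⟪x, γ⟫)
    (RS.finite.subset fun γ h => RS.mem_of_mem_pos h.1) ⟨β, hβ, hβS⟩
  obtain ⟨i, hi⟩ := RS.exists_inner_simpleRoot_pos hγ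
  have hne : γ ≠ RS.simpleRoot i := fun h => hγS [i] (by simp [h])
  set γ' := sRefl (RS.simpleRoot i) γ
  have hlt : ⟪x, γ'⟫ < ⟪x, γ⟫ := by
    have : 0 < 2 * ⟪RS.simpleRoot i, γ⟫ / ⟪RS.simpleRoot i, RS.simpleRoot i⟫ := by
      rw [real_inner_comm]
      exact div_pos (by linarith) (RS.inner_self_simpleRoot_pos i)
    rw [inner_sRefl_right]
    nlinarith [hx i]
  obtain ⟨l, hl⟩ : ∃ l, RS.wordProd l = sRefl γ' := by
    by_contra! h
    exact (hmin γ' ⟨RS.sRefl_simpleRoot_mem_pos i hγ hne, h⟩).not_gt hlt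
  have hγγ' :
      sRefl γ = sRefl (RS.simpleRoot i) * sRefl γ' * (sRefl (RS.simpleRoot i))⁻¹ := by
    rw [← sRefl_apply_of_isometry (inner_sRefl_sRefl _)]
    exact congrArg sRefl (reflFun_involutive _ γ).symm
  exact hγS (i :: (l ++ [i])) (by simp [hl, hγγ', sRefl_inv, mul_assoc])

lemma exists_wordProd_eq {w : V ≃ₗ[ℝ] V} (hw : w ∈ RS.weylGroup) :
    ∃ l, RS.wordProd l = w := by
  refine RS.weylGroup_induction (P := fun w => ∃ l, RS.wordProd l = w) (fun α hα => ?_)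
    ⟨[], rfl⟩ ?_ hw
  · rcases RS.pos_or_neg α hα with h | h
    · exact RS.exists_wordProd_eq_sRefl h
    · simpa [sRefl_neg] using RS.exists_wordProd_eq_sRefl h
  · rintro _ _ ⟨l₁, rfl⟩ ⟨l₂, rfl⟩
    exact ⟨l₁ ++ l₂, RS.wordProd_append l₁ l₂⟩

/-- The exchange condition. -/
lemma exists_wordProd_eq_mul_sRefl {β : V} (hβ : β ∈ RS.pos) :
    ∀ l : List (Fin p), -RS.wordProd l β ∈ RS.pos →
      ∃ l' : List (Fin p), l'.length < l.length ∧ RS.wordProd l' = RS.wordProd l * sRefl β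
  | [], h => absurd h (RS.neg_notMem_pos hβ)
  | a :: t, h => by
    by_cases ht : -RS.wordProd t β ∈ RS.pos
    · obtain ⟨t', hlen, ht'⟩ := exists_wordProd_eq_mul_sRefl hβ t ht
      exact ⟨a :: t', by simpa using hlen, by simp [ht', mul_assoc]⟩
    have hu := RS.wordProd_mem_weylGroup t
    have hγ : RS.wordProd t β ∈ RS.pos := (RS.pos_or_neg _
      (RS.apply_mem_of_mem_weylGroup hu (RS.mem_of_mem_pos hβ))).resolve_right ht
    have hγa : RS.wordProd t β = RS.simpleRoot a := by
      by_contra hne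
      exact RS.neg_notMem_pos (RS.sRefl_simpleRoot_mem_pos a hγ hne) (by simpa using h)
    have hconj := sRefl_apply_of_isometry (RS.inner_apply_apply_of_mem_weylGroup hu) β
    rw [hγa] at hconj
    refine ⟨t, by simp, ?_⟩
    rw [wordProd_cons, hconj, inv_mul_cancel_right, mul_assoc, sRefl_mul_self, mul_one]

lemma wordProd_eq_one_of_mapsTo (l : List (Fin p))
    (h : Set.MapsTo (RS.wordProd l) RS.pos RS.pos) : RS.wordProd l = 1 := by
  rcases l.eq_nil_or_concat' with rfl | ⟨t, b, rfl⟩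
  · rfl
  have hb := RS.simpleRoot_mem_pos b
  have hneg : -RS.wordProd t (RS.simpleRoot b) ∈ RS.pos := by
    simpa [sRefl_apply_self (RS.ne_zero_of_mem (RS.simpleRoot_mem b))] using h hb
  obtain ⟨t', hlen, ht'⟩ := RS.exists_wordProd_eq_mul_sRefl hb t hneg
  have heq : RS.wordProd (t ++ [b]) = RS.wordProd t' := by simp [ht']
  rw [heq] at h ⊢
  exact wordProd_eq_one_of_mapsTo t' h
termination_by l.length
decreasing_by subst_vars; simp only [List.length_append, List.length_singleton]; omega

lemma eq_one_of_apply_mem_chamber {u : V ≃ₗ[ℝ] V} (hu : u ∈ RS.weylGroup) {x : V}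
    (hx : x ∈ RS.chamber) (hux : u x ∈ RS.chamber) : u = 1 := by
  obtain ⟨l, rfl⟩ := RS.exists_wordProd_eq hu
  refine RS.wordProd_eq_one_of_mapsTo l fun β hβ => ?_
  rw [RS.mem_pos_iff_inner_pos hux (RS.apply_mem_of_mem_weylGroup hu (RS.mem_of_mem_pos hβ)),
    RS.inner_apply_apply_of_mem_weylGroup hu]
  exact RS.inner_pos_of_mem_chamber hx hβ

lemma eq_of_symm_apply_mem_chamber {v₁ v₂ : V ≃ₗ[ℝ] V} (hv₁ : v₁ ∈ RS.weylGroup)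
    (hv₂ : v₂ ∈ RS.weylGroup) {y : V} (h₁ : v₁.symm y ∈ RS.chamber)
    (h₂ : v₂.symm y ∈ RS.chamber) : v₁ = v₂ := by
  have := RS.eq_one_of_apply_mem_chamber (mul_mem (inv_mem hv₂) hv₁) h₁
    (by simpa [LinearEquiv.mul_apply] using h₂)
  exact (inv_mul_eq_one.mp this).symm

lemma exists_mem_weylGroup_inner_simpleRoot_nonneg (z : V) :
    ∃ u ∈ RS.weylGroup, ∀ i, 0 ≤ ⟪u z, RS.simpleRoot i⟫ := by
  have := RS.finite_weylGroup
  obtain ⟨x, hx⟩ := RS.chamber_nonempty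
  obtain ⟨u, hu⟩ := Finite.exists_max fun u : RS.weylGroup => ⟪x, u.1 z⟫
  refine ⟨u, u.2, fun i => le_of_not_gt fun hneg =>
    (hu ⟨_, mul_mem (RS.sRefl_simpleRoot_mem_weylGroup i) u.2⟩).not_gt ?_⟩
  have : 2 * ⟪RS.simpleRoot i, u.1 z⟫ / ⟪RS.simpleRoot i, RS.simpleRoot i⟫ < 0 := by
    rw [real_inner_comm]
    exact div_neg_of_neg_of_pos (by linarith) (RS.inner_self_simpleRoot_pos i)
  change ⟪x, u.1 z⟫ < ⟪x, sRefl (RS.simpleRoot i) (u.1 z)⟫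
  rw [inner_sRefl_right]
  nlinarith [hx i]

lemma exists_mem_weylGroup_apply_mem_chamber {z : V} (hz : ∀ β ∈ RS.Δ, ⟪z, β⟫ ≠ 0) :
    ∃ u ∈ RS.weylGroup, u z ∈ RS.chamber := by
  obtain ⟨u, hu, hnonneg⟩ := RS.exists_mem_weylGroup_inner_simpleRoot_nonneg z
  refine ⟨u, hu, fun i => (hnonneg i).lt_of_ne' ?_⟩
  have := RS.inner_apply_apply_of_mem_weylGroup hu z (u.symm (RS.simpleRoot i))
  rw [u.apply_symm_apply] at this
  rw [this]
  exact hz _ (RS.apply_mem_of_mem_weylGroup (inv_mem hu) (RS.simpleRoot_mem i))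

lemma alcove_nonempty : RS.alcove.Nonempty := by
  obtain ⟨x, hx⟩ := RS.chamber_nonempty
  have hθ := RS.inner_pos_of_mem_chamber hx RS.θ_mem
  refine ⟨(2 * ⟪x, RS.θ⟫)⁻¹ • x, fun i => ?_, ?_⟩
  · rw [real_inner_smul_left]
    exact mul_pos (by positivity) (hx i)
  · rw [real_inner_smul_left, inv_mul_lt_one₀ (by positivity)]
    linarith

lemma inner_lt_one_of_mem_alcove {x : V} (hx : x ∈ RS.alcove) {β : V} (hβ : β ∈ RS.Δ) :
    ⟪x, β⟫ < 1 := by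
  rcases RS.pos_or_neg β hβ with h | h
  · obtain ⟨c, hc⟩ := RS.θ_highest β h
    have : 0 ≤ ⟪x, ∑ i, (c i : ℝ) • RS.simpleRoot i⟫ := by
      rw [inner_sum]
      exact Finset.sum_nonneg fun i _ => by
        rw [real_inner_smul_right]
        exact mul_nonneg (Nat.cast_nonneg _) (hx.1 i).le
    have hθ : ⟪x, RS.θ⟫ = ⟪x, β⟫ + ⟪x, ∑ i, (c i : ℝ) • RS.simpleRoot i⟫ := by
      rw [hc, inner_add_right]
    linarith [hx.2]
  · have := RS.inner_pos_of_mem_chamber hx.1 h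
    rw [inner_neg_right] at this
    linarith

lemma abs_inner_lt_one_of_mem_alcove {x : V} (hx : x ∈ RS.alcove) {β : V} (hβ : β ∈ RS.Δ) :
    |⟪x, β⟫| < 1 := by
  have := RS.inner_lt_one_of_mem_alcove hx (RS.neg_mem β hβ)
  rw [inner_neg_right] at this
  exact abs_lt.mpr ⟨by linarith, RS.inner_lt_one_of_mem_alcove hx hβ⟩

lemma inner_sub_ne_zero_of_mem_alcove {x : V} (hx : x ∈ RS.alcove) {q : V}
    (hq : q ∈ RS.corootLattice) {β : V} (hβ : β ∈ RS.Δ) : ⟪x - q, β⟫ ≠ 0 := by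
  obtain ⟨n, hn⟩ := RS.corootLattice_le_coweightLattice hq β hβ
  rw [inner_sub_left, hn]
  exact sub_intCast_ne_zero (RS.abs_inner_lt_one_of_mem_alcove hx hβ)
    (RS.inner_ne_zero_of_mem_chamber hx.1 hβ) n

lemma inner_simpleRoot_nonpos_of_isDominantPair {v : V ≃ₗ[ℝ] V} {r : V}
    (h : RS.IsDominantPair v r) (i : Fin p) : ⟪r, RS.simpleRoot i⟫ ≤ 0 := by
  obtain ⟨-, h⟩ := h.2.2 i
  simp only [affAct, zero_sub, neg_pos, neg_eq_zero] at h
  rw [real_inner_comm]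
  rcases h with h | ⟨h, -⟩ <;> linarith

lemma isDominantPair_iff {v : V ≃ₗ[ℝ] V} (hv : v ∈ RS.weylGroup) {r : V}
    (hr : r ∈ RS.corootLattice) {x : V} (hx : x ∈ RS.alcove) :
    RS.IsDominantPair v r ↔ affStarInv v r x ∈ RS.chamber := by
  have hpair : ∀ i, ⟪affStarInv v r x, RS.simpleRoot i⟫
      = ⟪x, v (RS.simpleRoot i)⟫ - ⟪r, RS.simpleRoot i⟫ := fun i => by
    rw [affStarInv, inner_sub_left, ← RS.inner_apply_apply_of_mem_weylGroup hv,
      v.apply_symm_apply]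
  simp only [IsDominantPair, hv, hr, true_and, affAct, affPos, chamber, Set.mem_ofPred_eq, hpair]
  refine forall_congr' fun i => ?_
  have hvα := RS.apply_mem_of_mem_weylGroup hv (RS.simpleRoot_mem i)
  obtain ⟨n, hn⟩ := RS.corootLattice_le_coweightLattice hr _ (RS.simpleRoot_mem i)
  rw [real_inner_comm, hn, RS.mem_pos_iff_inner_pos hx.1 hvα,
    sub_intCast_pos_iff (RS.abs_inner_lt_one_of_mem_alcove hx hvα)]
  simp [hvα]

end RootSystemData

/-- Let `w = v·t_r ∈ Ŵ`, with `v ∈ W` and `r ∈ Q∨`. Then: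
(i) if `w` is dominant, then `r` lies in the negative of the closure of the fundamental
Weyl chamber, i.e. `(r, α) ≤ 0` for all `α ∈ Π`; (ii) the map from the set of dominant
elements of `Ŵ` to `Q∨` sending `w = v·t_r` to `v(r)` is a bijection. -/
theorem statement0 {V : Type*} [NormedAddCommGroup V] [InnerProductSpace ℝ V] {p : ℕ}
    (RS : RootSystemData V p) :
    (∀ (v : V ≃ₗ[ℝ] V) (r : V), RS.IsDominantPair v r →
      ∀ i, ⟪r, RS.simpleRoot i⟫ ≤ 0) ∧
    Set.BijOn (fun vr : (V ≃ₗ[ℝ] V) × V => vr.1 vr.2)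
      {vr : (V ≃ₗ[ℝ] V) × V | RS.IsDominantPair vr.1 vr.2}
      (RS.corootLattice : Set V) := by
  obtain ⟨x, hx⟩ := RS.alcove_nonempty
  have hchamber : ∀ {v r}, RS.IsDominantPair v r → v.symm (x - v r) ∈ RS.chamber :=
    fun {v r} h => by
      simpa [affStarInv] using (RS.isDominantPair_iff h.1 h.2.1 hx).mp h
  refine ⟨fun v r h => RS.inner_simpleRoot_nonpos_of_isDominantPair h, ?_, ?_, ?_⟩
  · rintro ⟨v, r⟩ ⟨hv, hr, -⟩
    exact RS.apply_mem_corootLattice hv hr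
  · rintro ⟨v₁, r₁⟩ h₁ ⟨v₂, r₂⟩ h₂ (heq : v₁ r₁ = v₂ r₂)
    obtain rfl : v₁ = v₂ :=
      RS.eq_of_symm_apply_mem_chamber h₁.1 h₂.1 (hchamber h₁) (heq ▸ hchamber h₂)
    exact Prod.ext rfl (v₁.injective heq)
  · intro q hq
    obtain ⟨u, hu, hux⟩ := RS.exists_mem_weylGroup_apply_mem_chamber
      fun _ => RS.inner_sub_ne_zero_of_mem_alcove hx hq
    refine ⟨(u.symm, u q), ?_, u.symm_apply_apply q⟩
    refine (RS.isDominantPair_iff (inv_mem hu) (RS.apply_mem_corootLattice hu hq) hx).mpr ?_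
    change u.symm.symm x - u q ∈ RS.chamber
    rwa [LinearEquiv.symm_symm, ← map_sub]
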